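/- arXiv:2008.00257 — 5 statements merged into one kernel-verified Lean document; each statement's English description precedes it below -/
import Mathlib

section
/- Fix n ∈ ℕ, k > 0, and c ∈ ℝ. The characteristic polynomial of the (2n+3)×(2n+3) Jacobian matrix J(k) of the delayed system at the symmetric equilibrium, where J(k) has first row (0, c, -c, 0, ..., 0), equals (up to sign) g(λ) = (λ+k)^{n+1} (λ(λ+k)^{n+1} - 2ck^{n+1}). -/
/-!
Multiplying the first column of `x - J` by `(x + k)^(n+1)` and adding to it the other columns,
with weight `k^(n+1-j) (x + k)^j` on `γ⁽ⁿ⁻ʲ⁾` and its negative on `η⁽ⁿ⁻ʲ⁾`, clears that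
column below the diagonal. The resulting matrix is upper triangular with diagonal
`x (x + k)^(n+1) - 2 c k^(n+1), x + k, …, x + k`, so
`(x + k)^(n+1) det (x - J) = (x (x + k)^(n+1) - 2 c k^(n+1)) (x + k)^(2n+2)`,
and `(X + C k)^(n+1)` cancels in the domain `R[X]`.
-/

open Polynomial Matrix

theorem Matrix.det_updateCol_mulVec {ι R : Type*} [Fintype ι] [DecidableEq ι] [CommRing R]
    (A : Matrix ι ι R) (z : ι → R) (i : ι) :
    (A.updateCol i (A *ᵥ z)).det = z i * A.det := by
  rw [← cramer_apply, cramer_eq_adjugate_mulVec, mulVec_mulVec, adjugate_mul, smul_mulVec,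
    one_mulVec, Pi.smul_apply, smul_eq_mul, mul_comm]

section DelayJacobian

variable {R : Type*} [CommRing R]

def delayJacobian (n : ℕ) (k c : R) : Matrix (Fin (2 * n + 3)) (Fin (2 * n + 3)) R :=
  Matrix.of fun i j =>
    if i.val = 0 then
      (if j.val = 1 then c else if j.val = 2 then -c else 0)
    else if i.val = j.val then -k
    else if j.val = i.val + 2 then k
    else if i.val = 2 * n + 1 ∧ j.val = 0 then k
    else if i.val = 2 * n + 2 ∧ j.val = 0 then -k
    else 0

lemma delayJacobian_map {S : Type*} [CommRing S] (f : R →+* S) (n : ℕ) (k c : R) :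
    (delayJacobian n k c).map f = delayJacobian n (f k) (f c) := by
  ext i j
  simp only [delayJacobian, map_apply, of_apply]
  split_ifs <;> simp

variable (n : ℕ) (k c : R)

lemma delayJacobian_apply_eq_zero {i j : Fin (2 * n + 3)}
    (h₀ : (i : ℕ) = 0 → (j : ℕ) ≠ 1 ∧ (j : ℕ) ≠ 2)
    (h₁ : (i : ℕ) ≠ 0 → (j : ℕ) ≠ i ∧ (j : ℕ) ≠ i + 2 ∧ ((j : ℕ) = 0 → (i : ℕ) ≤ 2 * n)) :
    delayJacobian n k c i j = 0 := by
  simp only [delayJacobian, of_apply]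
  split_ifs <;> first | rfl | omega

lemma delayJacobian_apply_self {i : Fin (2 * n + 3)} (hi : i ≠ 0) :
    delayJacobian n k c i i = -k := by
  simp [delayJacobian, hi]

lemma delayJacobian_apply_of_lt {i j : Fin (2 * n + 3)} (hj : j ≠ 0) (hji : j < i) :
    delayJacobian n k c i j = 0 := by
  rw [← Fin.val_ne_zero_iff] at hj
  rw [Fin.lt_def] at hji
  exact delayJacobian_apply_eq_zero n k c (by omega) (by omega)

lemma delayJacobian_mulVec_apply_zero (v : Fin (2 * n + 3) → R) :
    (delayJacobian n k c *ᵥ v) 0 = c * (v ⟨1, by omega⟩ - v ⟨2, by omega⟩) := by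
  rw [mulVec, dotProduct, Fintype.sum_eq_add ⟨1, by omega⟩ ⟨2, by omega⟩ (by simp)]
  · simp only [delayJacobian, of_apply, Fin.val_zero]
    split_ifs <;> first | omega | ring
  · intro j hj
    simp only [ne_eq, Fin.ext_iff] at hj
    rw [delayJacobian_apply_eq_zero n k c (by omega) (by simp), zero_mul]

lemma delayJacobian_mulVec_apply_of_le (v : Fin (2 * n + 3) → R) {i : Fin (2 * n + 3)}
    (hi : 1 ≤ (i : ℕ)) (hin : (i : ℕ) ≤ 2 * n) :
    (delayJacobian n k c *ᵥ v) i = k * (v ⟨i + 2, by omega⟩ - v i) := by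
  rw [mulVec, dotProduct, Fintype.sum_eq_add i ⟨i + 2, by omega⟩ (by simp [Fin.ext_iff])]
  · simp only [delayJacobian, of_apply]
    split_ifs <;> first | omega | ring
  · intro j hj
    simp only [ne_eq, Fin.ext_iff] at hj
    rw [delayJacobian_apply_eq_zero n k c (by omega) (by omega), zero_mul]

lemma delayJacobian_mulVec_apply_of_eq_two_mul_add_one (v : Fin (2 * n + 3) → R)
    {i : Fin (2 * n + 3)} (hi : (i : ℕ) = 2 * n + 1) :
    (delayJacobian n k c *ᵥ v) i = k * (v 0 - v i) := by
  rw [mulVec, dotProduct, Fintype.sum_eq_add i 0 (by simp [Fin.ext_iff, hi])]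
  · simp only [delayJacobian, of_apply, Fin.val_zero, and_true]
    split_ifs <;> first | omega | ring
  · intro j hj
    simp only [ne_eq, Fin.ext_iff, Fin.val_zero] at hj
    rw [delayJacobian_apply_eq_zero n k c (by omega) (by omega), zero_mul]

lemma delayJacobian_mulVec_apply_of_eq_two_mul_add_two (v : Fin (2 * n + 3) → R)
    {i : Fin (2 * n + 3)} (hi : (i : ℕ) = 2 * n + 2) :
    (delayJacobian n k c *ᵥ v) i = k * (-v 0 - v i) := by
  rw [mulVec, dotProduct, Fintype.sum_eq_add i 0 (by simp [Fin.ext_iff, hi])]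
  · simp only [delayJacobian, of_apply, Fin.val_zero, and_true]
    split_ifs <;> first | omega | contradiction | ring
  · intro j hj
    simp only [ne_eq, Fin.ext_iff, Fin.val_zero] at hj
    rw [delayJacobian_apply_eq_zero n k c (by omega) (by omega), zero_mul]

variable (x : R)

/-- Index `2n+3` stands for the `m`-coordinate and `2n+4` for `-m`, so that the recursion
`delayChainVec_add_two` also covers the last two rows, which are fed by `±m`. -/
def delayChainVec (i : ℕ) : R :=
  (-1) ^ (i + 1) * k ^ (n + 1 - (i - 1) / 2) * (x + k) ^ ((i - 1) / 2)

lemma delayChainVec_add_two {i : ℕ} (hi : 1 ≤ i) (hin : i ≤ 2 * n + 2) :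
    (x + k) * delayChainVec n k x i = k * delayChainVec n k x (i + 2) := by
  have h₁ : (i + 2 - 1) / 2 = (i - 1) / 2 + 1 := by omega
  have h₂ : n + 1 - (i - 1) / 2 = n + 1 - ((i - 1) / 2 + 1) + 1 := by omega
  rw [delayChainVec, delayChainVec, h₁, h₂]
  ring

lemma delayChainVec_two_mul_add_three :
    delayChainVec n k x (2 * n + 3) = (x + k) ^ (n + 1) := by
  have h : (2 * n + 3 - 1) / 2 = n + 1 := by omega
  rw [delayChainVec, h, Nat.sub_self, Even.neg_one_pow ⟨n + 2, by ring⟩]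
  ring

lemma delayChainVec_two_mul_add_four :
    delayChainVec n k x (2 * n + 4) = -(x + k) ^ (n + 1) := by
  have h : (2 * n + 4 - 1) / 2 = n + 1 := by omega
  rw [delayChainVec, h, Nat.sub_self, Odd.neg_one_pow ⟨n + 2, by ring⟩]
  ring

def delayClearingVec (i : Fin (2 * n + 3)) : R :=
  delayChainVec n k x (if (i : ℕ) = 0 then 2 * n + 3 else i)

lemma delayClearingVec_zero : delayClearingVec n k x 0 = (x + k) ^ (n + 1) := by
  simp [delayClearingVec, delayChainVec_two_mul_add_three]

lemma delayClearingVec_of_ne_zero {i : Fin (2 * n + 3)} (hi : (i : ℕ) ≠ 0) :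
    delayClearingVec n k x i = delayChainVec n k x i := by
  rw [delayClearingVec, if_neg hi]

lemma sub_delayJacobian_mulVec_delayClearingVec :
    (scalar _ x - delayJacobian n k c) *ᵥ delayClearingVec n k x =
      Pi.single 0 (x * (x + k) ^ (n + 1) - 2 * c * k ^ (n + 1)) := by
  funext i
  rw [sub_mulVec, scalar_apply, Pi.sub_apply, mulVec_diagonal]
  rcases (by omega : (i : ℕ) = 0 ∨ (1 ≤ (i : ℕ) ∧ (i : ℕ) ≤ 2 * n) ∨ (i : ℕ) = 2 * n + 1 ∨
      (i : ℕ) = 2 * n + 2) with hi | ⟨hi, hin⟩ | hi | hi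
  · obtain rfl := Fin.val_eq_zero_iff.mp hi
    rw [delayJacobian_mulVec_apply_zero, Pi.single_eq_same, delayClearingVec_zero,
      delayClearingVec_of_ne_zero _ _ _ one_ne_zero, delayClearingVec_of_ne_zero _ _ _ two_ne_zero]
    simp only [delayChainVec, Nat.reduceAdd, Nat.reduceSub, Nat.reduceDiv, Nat.sub_zero]
    ring
  all_goals rw [Pi.single_eq_of_ne (Fin.val_ne_zero_iff.mp (by omega)),
    delayClearingVec_of_ne_zero _ _ _ (by omega)]
  · rw [delayJacobian_mulVec_apply_of_le n k c _ hi hin,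
      delayClearingVec_of_ne_zero _ _ _ (by simp), delayClearingVec_of_ne_zero _ _ _ (by omega)]
    linear_combination delayChainVec_add_two n k x hi (by omega)
  · rw [delayJacobian_mulVec_apply_of_eq_two_mul_add_one n k c _ hi, delayClearingVec_zero,
      delayClearingVec_of_ne_zero _ _ _ (by omega), hi]
    have h := delayChainVec_add_two n k x (i := 2 * n + 1) (by omega) (by omega)
    rw [delayChainVec_two_mul_add_three] at h
    linear_combination h
  · rw [delayJacobian_mulVec_apply_of_eq_two_mul_add_two n k c _ hi, delayClearingVec_zero,
      delayClearingVec_of_ne_zero _ _ _ (by omega), hi]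
    have h := delayChainVec_add_two n k x (i := 2 * n + 2) (by omega) (by omega)
    rw [delayChainVec_two_mul_add_four] at h
    linear_combination h

lemma det_sub_delayJacobian :
    (x + k) ^ (n + 1) * (scalar _ x - delayJacobian n k c).det =
      (x * (x + k) ^ (n + 1) - 2 * c * k ^ (n + 1)) * (x + k) ^ (2 * n + 2) := by
  have h := det_updateCol_mulVec (scalar _ x - delayJacobian n k c) (delayClearingVec n k x) 0
  rw [sub_delayJacobian_mulVec_delayClearingVec, det_of_isUpperTriangular,
    Fin.prod_univ_succ] at h
  · have hdiag (i : Fin (2 * n + 2)) :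
        (scalar (Fin (2 * n + 3)) x - delayJacobian n k c) i.succ i.succ = x + k := by
      rw [Matrix.sub_apply, scalar_apply, diagonal_apply_eq,
        delayJacobian_apply_self n k c (Fin.succ_ne_zero i), sub_neg_eq_add]
    simp only [updateCol_self, Pi.single_eq_same, updateCol_ne (Fin.succ_ne_zero _), hdiag,
      Finset.prod_const, Finset.card_univ, Fintype.card_fin] at h
    rw [h, delayClearingVec_zero]
  · rintro i j (hji : j < i)
    rw [updateCol_apply]
    split_ifs with hj
    · subst hj
      exact Pi.single_eq_of_ne (ne_of_gt hji) _
    · rw [Matrix.sub_apply, scalar_apply, diagonal_apply_ne _ (ne_of_gt hji),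
        delayJacobian_apply_of_lt n k c hj hji, sub_zero]

end DelayJacobian

theorem charpoly_delayJacobian {R : Type*} [CommRing R] [IsDomain R] (n : ℕ) (k c : R) :
    (delayJacobian n k c).charpoly =
      (X + C k) ^ (n + 1) * (X * (X + C k) ^ (n + 1) - C (2 * c * k ^ (n + 1))) := by
  apply mul_left_cancel₀ (pow_ne_zero (n + 1) (X_add_C_ne_zero k))
  rw [charpoly, charmatrix, RingHom.mapMatrix_apply, delayJacobian_map, det_sub_delayJacobian]
  simp only [map_mul, map_pow, map_ofNat]
  ring

theorem stmt6_general (n : ℕ) (k : ℝ) (c : ℝ) :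
    let J : Matrix (Fin (2*n+3)) (Fin (2*n+3)) ℝ := Matrix.of fun i j =>
      if i.val = 0 then
        (if j.val = 1 then c else if j.val = 2 then -c else 0)
      else if i.val = j.val then -k
      else if j.val = i.val + 2 then k
      else if i.val = 2*n+1 ∧ j.val = 0 then k
      else if i.val = 2*n+2 ∧ j.val = 0 then -k
      else 0
    J.charpoly = (X + C k)^(n+1) * (X * (X + C k)^(n+1) - C (2*c*k^(n+1))) :=
  charpoly_delayJacobian n k c

/-- The characteristic polynomial of the `(2n+3)×(2n+3)` Jacobian
`J(k)` of the delayed system at the symmetric equilibrium equals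
`(λ+k)^{n+1} (λ(λ+k)^{n+1} - 2ck^{n+1})`.  Variables are ordered
`(m, γ⁽ⁿ⁾, η⁽ⁿ⁾, γ⁽ⁿ⁻¹⁾, η⁽ⁿ⁻¹⁾, …, γ⁽⁰⁾, η⁽⁰⁾)`. -/
theorem stmt6 (n : ℕ) (k : ℝ) (hk : 0 < k) (c : ℝ) :
    let J : Matrix (Fin (2*n+3)) (Fin (2*n+3)) ℝ := Matrix.of fun i j =>
      if i.val = 0 then
        (if j.val = 1 then c else if j.val = 2 then -c else 0)
      else if i.val = j.val then -k
      else if j.val = i.val + 2 then k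
      else if i.val = 2*n+1 ∧ j.val = 0 then k
      else if i.val = 2*n+2 ∧ j.val = 0 then -k
      else 0
    J.charpoly = (X + C k)^(n+1) * (X * (X + C k)^(n+1) - C (2*c*k^(n+1))) :=
  stmt6_general n k c
end

section
/- Let k > 0, n ∈ ℕ, a > 0. The characteristic polynomial of the (n+2)×(n+2) matrix J(k) with first row (0, -a/4, 0,...,0), a subdiagonal delay chain (rows 2 through n+1 of the form -k on the diagonal, k on the superdiagonal), and last row (2k, 0,...,0, -k), is p(λ) = λ(λ+k)^{n+1} + (a/2)k^{n+1}. -/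
/-!
`λI - J` is upper bidiagonal except for the corner entry `-2k`. Expanding the determinant along the
first column leaves two triangular minors, so it is the product of the diagonal, `λ(λ+k)^{n+1}`,
plus the signed product of the corner and the superdiagonal, `(a/2)k^{n+1}`.
-/

open Polynomial

namespace Matrix

variable {R : Type*} [CommRing R]

def bidiagonalWithCorner (m : ℕ) (d e : ℕ → R) (c : R) : Matrix (Fin (m + 2)) (Fin (m + 2)) R :=
  of fun i j =>
    if (i : ℕ) = j then d i
    else if (j : ℕ) = i + 1 then e i
    else if (i : ℕ) = m + 1 ∧ (j : ℕ) = 0 then c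
    else 0

variable (m : ℕ) (d e : ℕ → R) (c : R)

lemma bidiagonalWithCorner_apply_zero (i : Fin (m + 2)) :
    bidiagonalWithCorner m d e c i 0 =
      if (i : ℕ) = 0 then d 0 else if (i : ℕ) = m + 1 then c else 0 := by
  simp only [bidiagonalWithCorner, of_apply, Fin.val_zero]
  split_ifs <;> grind

lemma det_bidiagonalWithCorner_submatrix_succ_succ :
    ((bidiagonalWithCorner m d e c).submatrix Fin.succ Fin.succ).det =
      ∏ i ∈ Finset.range (m + 1), d (i + 1) := by
  rw [det_of_isUpperTriangular, ← Fin.prod_univ_eq_prod_range]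
  · simp [bidiagonalWithCorner]
  · intro i j (hji : (j : ℕ) < i)
    simp only [bidiagonalWithCorner, submatrix_apply, of_apply, Fin.val_succ]
    split_ifs <;> grind

lemma det_bidiagonalWithCorner_submatrix_castSucc_succ :
    ((bidiagonalWithCorner m d e c).submatrix Fin.castSucc Fin.succ).det =
      ∏ i ∈ Finset.range (m + 1), e i := by
  rw [det_of_isLowerTriangular, ← Fin.prod_univ_eq_prod_range]
  · simp [bidiagonalWithCorner]
  · intro i j (hij : (i : ℕ) < j)
    simp only [bidiagonalWithCorner, submatrix_apply, of_apply, Fin.val_succ, Fin.val_castSucc]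
    split_ifs <;> grind

/-- Only the identity and the cycle `0 → 1 → ⋯ → m+1 → 0` contribute to the determinant. -/
theorem det_bidiagonalWithCorner :
    (bidiagonalWithCorner m d e c).det =
      ∏ i ∈ Finset.range (m + 2), d i + (-1) ^ (m + 1) * c * ∏ i ∈ Finset.range (m + 1), e i := by
  rw [det_succ_column_zero, Fintype.sum_eq_add 0 (Fin.last (m + 1)) (Fin.last_pos.ne)]
  · rw [Fin.succAbove_zero, Fin.succAbove_last, det_bidiagonalWithCorner_submatrix_succ_succ,
      det_bidiagonalWithCorner_submatrix_castSucc_succ, bidiagonalWithCorner_apply_zero,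
      bidiagonalWithCorner_apply_zero, Finset.prod_range_succ' d]
    simp only [Fin.val_zero, Fin.val_last, if_true, Nat.succ_ne_zero, if_false, pow_zero, one_mul]
    ring
  · rintro i ⟨hi0, hilast⟩
    rw [bidiagonalWithCorner_apply_zero, if_neg (show (i : ℕ) ≠ 0 from Fin.val_ne_of_ne hi0),
      if_neg (show (i : ℕ) ≠ m + 1 from Fin.val_ne_of_ne hilast)]
    simp

end Matrix

theorem stmt8_general (n : ℕ) (k : ℝ) (a : ℝ) :
    let J : Matrix (Fin (n+2)) (Fin (n+2)) ℝ := Matrix.of fun i j =>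
      if i.val = 0 ∧ j.val = 1 then -a/4
      else if 1 ≤ i.val ∧ i.val = j.val then -k
      else if 1 ≤ i.val ∧ j.val = i.val + 1 then k
      else if i.val = n+1 ∧ j.val = 0 then 2*k
      else 0
    J.charpoly = X * (X + C k)^(n+1) + C (a/2 * k^(n+1)) := by
  intro J
  have hcharmatrix : J.charmatrix = Matrix.bidiagonalWithCorner n
      (fun i => if i = 0 then X else X + C k) (fun i => if i = 0 then C (a / 4) else -C k)
      (-C (2 * k)) := by
    ext i j
    simp only [J, Matrix.charmatrix_apply, Matrix.bidiagonalWithCorner, Matrix.of_apply,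
      Matrix.diagonal_apply, Fin.ext_iff]
    split_ifs <;> first | omega | simp [neg_div]
  rw [Matrix.charpoly, hcharmatrix, Matrix.det_bidiagonalWithCorner,
    Finset.prod_range_succ' (fun i => if i = 0 then X else _),
    Finset.prod_range_succ' (fun i => if i = 0 then C (a / 4) else _)]
  simp only [Nat.succ_ne_zero, if_false, if_true, Finset.prod_const, Finset.card_range]
  rw [show a / 2 * k ^ (n + 1) = 2 * k * (a / 4) * k ^ n by ring]
  simp only [map_mul, map_pow]
  have hsign : (-1 : ℝ[X]) ^ (n + 1) * (-1) * (-1) ^ n = 1 := by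
    rw [mul_assoc, ← pow_succ', ← pow_add, Even.neg_one_pow ⟨n + 1, by ring⟩]
  linear_combination (C 2 * C k * C (a / 4) * C k ^ n) * hsign

/-- The characteristic polynomial of the `(n+2)×(n+2)` Jacobian of
the reduced delayed linear competitive model at `(1/2,0,…,0)` is
`λ(λ+k)^{n+1} + (a/2)k^{n+1}`. -/
theorem stmt8 (n : ℕ) (k : ℝ) (hk : 0 < k) (a : ℝ) (ha : 0 < a) :
    let J : Matrix (Fin (n+2)) (Fin (n+2)) ℝ := Matrix.of fun i j =>
      if i.val = 0 ∧ j.val = 1 then -a/4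
      else if 1 ≤ i.val ∧ i.val = j.val then -k
      else if 1 ≤ i.val ∧ j.val = i.val + 1 then k
      else if i.val = n+1 ∧ j.val = 0 then 2*k
      else 0
    J.charpoly = X * (X + C k)^(n+1) + C (a/2 * k^(n+1)) :=
  stmt8_general n k a
end

section
/- Let a > 0 and k > (9/16)a. Then every root of the polynomial p(λ) = λ⁴ + 3kλ³ + 3k²λ² + k³λ + (a/2)k³ has strictly negative real part. -/
/-!
The quartic is `z (z + k)³ + c` with `c = a k³ / 2`. Suppose a root `z = x + iy` has `x ≥ 0`.
A real root is impossible, since then every term is positive. Otherwise the imaginary part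
forces `y² (4x + 3k) = (x + k)² (4x + k)`, and eliminating `y` from the real part gives
`c (4x + 3k)² = 8 ((x + k)(2x + k))³`. For `x ≥ 0` the right-hand side is at least
`(8k⁴/9) (4x + 3k)²`, with equality at the imaginary-axis crossing `x = 0`, `y = k/√3`,
so `c ≥ 8k⁴/9`, i.e. `k ≤ 9a/16`.
-/

namespace Complex

lemma re_mul_add_ofReal_pow_three (z : ℂ) (k : ℝ) :
    (z * (z + k) ^ 3).re =
      z.re * (z.re + k) ^ 3 - 3 * (z.re + k) * (2 * z.re + k) * z.im ^ 2 + z.im ^ 4 := by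
  simp only [pow_succ, pow_zero, one_mul, mul_re, mul_im, add_re, add_im, ofReal_re, ofReal_im]
  ring

lemma im_mul_add_ofReal_pow_three (z : ℂ) (k : ℝ) :
    (z * (z + k) ^ 3).im =
      z.im * ((z.re + k) ^ 2 * (4 * z.re + k) - (4 * z.re + 3 * k) * z.im ^ 2) := by
  simp only [pow_succ, pow_zero, one_mul, mul_re, mul_im, add_re, add_im, ofReal_re, ofReal_im]
  ring

end Complex

open Complex

lemma pow_four_mul_sq_le_nine_mul_cube {x k : ℝ} (hx : 0 ≤ x) (hk : 0 ≤ k) :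
    k ^ 4 * (4 * x + 3 * k) ^ 2 ≤ 9 * ((x + k) * (2 * x + k)) ^ 3 := by
  have hP : k * (k + 3 * x) ≤ (x + k) * (2 * x + k) := by nlinarith [sq_nonneg x]
  calc k ^ 4 * (4 * x + 3 * k) ^ 2 ≤ 9 * (k * (k + 3 * x)) ^ 3 := by
        rw [mul_pow]
        nlinarith [pow_nonneg hk 3, pow_nonneg hk 4, mul_nonneg (pow_nonneg hk 3) hx,
          mul_nonneg (pow_nonneg hk 2) (mul_nonneg hx hx),
          mul_nonneg (pow_nonneg hk 3) (pow_nonneg hx 3)]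
    _ ≤ 9 * ((x + k) * (2 * x + k)) ^ 3 := by gcongr

lemma const_mul_sq_eq_of_mul_add_pow_three_add_eq_zero {k c : ℝ} {z : ℂ}
    (hz : z * (z + k) ^ 3 + c = 0) (hy : z.im ≠ 0) :
    c * (4 * z.re + 3 * k) ^ 2 = 8 * ((z.re + k) * (2 * z.re + k)) ^ 3 := by
  have hre := congrArg re hz
  have him := congrArg im hz
  simp only [add_re, add_im, ofReal_re, ofReal_im, zero_re, zero_im, add_zero,
    re_mul_add_ofReal_pow_three, im_mul_add_ofReal_pow_three] at hre him
  have hy2 : (4 * z.re + 3 * k) * z.im ^ 2 = (z.re + k) ^ 2 * (4 * z.re + k) := by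
    have := (mul_eq_zero.mp him).resolve_left hy
    linarith
  linear_combination (4 * z.re + 3 * k) ^ 2 * hre
    - ((4 * z.re + 3 * k) * z.im ^ 2 + (z.re + k) ^ 2 * (4 * z.re + k)
      - 3 * (z.re + k) * (2 * z.re + k) * (4 * z.re + 3 * k)) * hy2

theorem re_neg_of_mul_add_pow_three_add_eq_zero {k c : ℝ} (hk : 0 < k) (hc : 0 < c)
    (hck : 9 * c < 8 * k ^ 4) {z : ℂ} (hz : z * (z + k) ^ 3 + c = 0) : z.re < 0 := by
  by_contra! hx
  by_cases hy : z.im = 0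
  · have hre := congrArg re hz
    simp only [add_re, ofReal_re, zero_re, re_mul_add_ofReal_pow_three, hy] at hre
    have : 0 ≤ z.re * (z.re + k) ^ 3 := by positivity
    nlinarith
  · have hconst := const_mul_sq_eq_of_mul_add_pow_three_add_eq_zero hz hy
    have hbound := pow_four_mul_sq_le_nine_mul_cube hx hk.le
    have hm : 0 < (4 * z.re + 3 * k) ^ 2 := by positivity
    nlinarith

/-- For `a > 0` and `k > (9/16)a`, every root of
`λ⁴ + 3kλ³ + 3k²λ² + k³λ + (a/2)k³` has strictly negative real part. -/
theorem stmt12 (a k : ℝ) (ha : 0 < a) (hk : (9/16)*a < k) :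
    ∀ z : ℂ, z^4 + 3*(k:ℂ)*z^3 + 3*(k:ℂ)^2*z^2 + (k:ℂ)^3*z + (a/2 : ℝ)*(k:ℂ)^3 = 0
      → z.re < 0 := by
  intro z hz
  have hk0 : 0 < k := by linarith
  refine re_neg_of_mul_add_pow_three_add_eq_zero hk0 (c := a / 2 * k ^ 3) (by positivity)
    (by nlinarith [pow_pos hk0 3]) ?_
  push_cast at hz ⊢
  linear_combination hz
end

section
/- Let a > 0 and k* = (9/16)a. Then the polynomial λ⁴ + 3k*λ³ + 3(k*)²λ² + (k*)³λ + (a/2)(k*)³ has a pair of purely imaginary nonzero roots. -/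
open Complex

/-- At `z = iω` the real and imaginary parts of `z (z + k)³ + c` are `ω⁴ - 3k²ω² + c` and
`kω (k² - 3ω²)`; both vanish once `3ω² = k²` and `c = 8k⁴/9`. -/
theorem I_mul_root_of_three_mul_sq_eq {k ω : ℂ} (hω : 3 * ω ^ 2 = k ^ 2) :
    (I * ω) ^ 4 + 3 * k * (I * ω) ^ 3 + 3 * k ^ 2 * (I * ω) ^ 2 + k ^ 3 * (I * ω)
      + 8 / 9 * k ^ 4 = 0 := by
  linear_combination (ω ^ 4 * (I ^ 2 - 1) + 3 * k * ω ^ 3 * I + 3 * k ^ 2 * ω ^ 2) * I_sq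
    - (8 / 9 * k ^ 2 - ω ^ 2 / 3 + I * k * ω) * hω

/-- For `a > 0` and `k* = (9/16)a`, the polynomial
`λ⁴ + 3k*λ³ + 3k*²λ² + k*³λ + (a/2)k*³` has a pair of purely imaginary
nonzero roots `±iω`. -/
theorem stmt13 (a : ℝ) (ha : 0 < a) :
    let kstar : ℝ := (9/16)*a
    let p : ℂ → ℂ := fun z =>
      z^4 + 3*(kstar:ℂ)*z^3 + 3*(kstar:ℂ)^2*z^2 + (kstar:ℂ)^3*z + ((a/2 : ℝ):ℂ)*(kstar:ℂ)^3
    ∃ ω : ℝ, 0 < ω ∧ p (Complex.I * ω) = 0 ∧ p (-(Complex.I * ω)) = 0 := by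
  intro kstar p
  -- `k* = 9a/16` is exactly the choice making the constant term `(a/2) k*³` equal to `8k*⁴/9`.
  have hconst : ((a / 2 : ℝ) : ℂ) * (kstar : ℂ) ^ 3 = 8 / 9 * (kstar : ℂ) ^ 4 := by
    simp only [kstar]; push_cast; ring
  have hroot : ∀ ω : ℝ, 3 * ω ^ 2 = kstar ^ 2 → p (I * ω) = 0 := fun ω hω => by
    simp only [p, hconst]
    exact I_mul_root_of_three_mul_sq_eq (by exact_mod_cast hω)
  set ω := kstar / √3
  have hω : 3 * ω ^ 2 = kstar ^ 2 := by
    rw [div_pow, Real.sq_sqrt (by norm_num)]; ring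
  refine ⟨ω, by positivity, hroot ω hω, ?_⟩
  have hneg : -(I * ω) = I * ((-ω : ℝ) : ℂ) := by push_cast; ring
  rw [hneg]
  exact hroot (-ω) (by rwa [neg_sq])
end

section
/- Let X be a birth-death process on E_N = {i/N : 0 ≤ i ≤ N} with birth rates r⁺(x) ≥ 0 and death rates r⁻(x) ≥ 0 satisfying r⁺(0) = r⁻(0) = 0, and suppose there exist ε̄ > 0 and δ > 0 with r⁻(x) ≥ (1+δ)r⁺(x) for all x ∈ E_N ∩ (0, 2ε̄]. Then for C = log(1+δ) and any starting point x < ε̄, P_x(sup_{t≥0} X(t) > 2ε̄) < ε̄ N e^{-ε̄ C N}. -/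
/-!
Write `b = 1 + δ`, `n = ⌊2ε̄N⌋₊` and index the states `j / N` of `E_N` by `j`. Where the drift
condition holds, `b ^ j` is a supermartingale for the jump chain:
`p b ^ (j + 1) + q b ^ (j - 1) ≤ b ^ j` as soon as `b p ≤ q`. Capped at level `n`, the potential
`φ j = b ^ min j n - 1` still decreases in expectation at every step, and by at least
`(b - 1) b ^ n` times the probability of an up-jump from `n` to `n + 1`. Telescoping, the expected
number of such up-jumps is at most `φ i₀ / ((b - 1) b ^ n)`; only the one-step joint laws of
`(Y m, Y (m + 1))` enter here, no Markov property. A path exceeding `2ε̄` makes such an up-jump,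
and `b ^ i₀ - 1 ≤ δ i₀ b ^ (i₀ - 1)` together with `i₀ < ε̄N` and `2ε̄N < n + 1` gives the bound.
-/

open MeasureTheory Filter
open scoped ENNReal

theorem tsum_le_of_succ_add_le {u F : ℕ → ℝ≥0∞} (h : ∀ m, F (m + 1) + u m ≤ F m) :
    ∑' m, u m ≤ F 0 := by
  have key : ∀ M, ∑ m ∈ Finset.range M, u m + F M ≤ F 0 := by
    intro M
    induction M with
    | zero => simp
    | succ M ih =>
      calc ∑ m ∈ Finset.range (M + 1), u m + F (M + 1)
          = ∑ m ∈ Finset.range M, u m + (F (M + 1) + u M) := by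
            rw [Finset.sum_range_succ]; ring
        _ ≤ ∑ m ∈ Finset.range M, u m + F M := by gcongr; exact h M
        _ ≤ F 0 := ih
  exact ENNReal.tsum_le_of_sum_range_le fun M => le_self_add.trans (key M)

theorem exists_le_and_lt_succ {α : Type*} [LinearOrder α] {y : ℕ → α} {L : α} (h₀ : y 0 ≤ L)
    (h : ∃ m, L < y m) : ∃ m, y m ≤ L ∧ L < y (m + 1) := by
  by_contra! hcon
  have hle : ∀ m, y m ≤ L := fun m => Nat.rec h₀ (fun k ih => hcon k ih) m
  obtain ⟨m, hm⟩ := h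
  exact (hle m).not_gt hm

section Partition

variable {Ω α : Type*} [MeasurableSpace Ω] [MeasurableSpace α] [MeasurableSingletonClass α]
  {μ : Measure Ω} {X : Ω → α}

theorem lintegral_eq_sum_setLIntegral (hX : Measurable X) {S : Finset α}
    (hS : ∀ᵐ ω ∂μ, X ω ∈ S) (g : Ω → ℝ≥0∞) :
    ∫⁻ ω, g ω ∂μ = ∑ s ∈ S, ∫⁻ ω in {ω | X ω = s}, g ω ∂μ := by
  have hcover : (⋃ s ∈ S, {ω | X ω = s}) =ᵐ[μ] (Set.univ : Set Ω) := by
    rw [ae_eq_univ]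
    refine measure_mono_null (fun ω hω => ?_) (ae_iff.1 hS)
    simpa using hω
  rw [← setLIntegral_univ, ← setLIntegral_congr hcover]
  exact lintegral_biUnion_finset
    (fun s _ t _ hst => Set.disjoint_left.2 fun ω hs ht => hst (hs.symm.trans ht))
    (fun s _ => hX (measurableSet_singleton s)) g

theorem setLIntegral_comp_eq (hX : Measurable X) (g : α → ℝ≥0∞) (s : α) :
    ∫⁻ ω in {ω | X ω = s}, g (X ω) ∂μ = g s * μ {ω | X ω = s} := by
  have hs : MeasurableSet {ω | X ω = s} := hX (measurableSet_singleton s)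
  rw [setLIntegral_congr_fun hs fun ω (hω : X ω = s) => congrArg g hω, setLIntegral_const]

end Partition

theorem disjoint_step_add_sub {Ω : Type*} {Y : ℕ → Ω → ℝ} {h : ℝ} (hh : h ≠ 0) (m : ℕ) (s : ℝ) :
    Disjoint {ω | Y (m + 1) ω = s + h ∧ Y m ω = s} {ω | Y (m + 1) ω = s - h ∧ Y m ω = s} :=
  Set.disjoint_left.2 fun _ h₁ h₂ => hh (by linarith [h₁.1.symm.trans h₂.1])

structure IsBirthDeathJumpChain {Ω : Type*} [MeasurableSpace Ω] (P : Measure Ω)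
    (Y : ℕ → Ω → ℝ) (h : ℝ) (rp rm : ℝ → ℝ) : Prop where
  measurable : ∀ m, Measurable (Y m)
  up : ∀ (m : ℕ) (s : ℝ), rp s + rm s ≠ 0 →
    P {ω | Y (m + 1) ω = s + h ∧ Y m ω = s}
      = ENNReal.ofReal (rp s / (rp s + rm s)) * P {ω | Y m ω = s}
  down : ∀ (m : ℕ) (s : ℝ), rp s + rm s ≠ 0 →
    P {ω | Y (m + 1) ω = s - h ∧ Y m ω = s}
      = ENNReal.ofReal (rm s / (rp s + rm s)) * P {ω | Y m ω = s}
  stay : ∀ (m : ℕ) (s : ℝ), rp s + rm s = 0 →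
    P {ω | Y (m + 1) ω = s ∧ Y m ω = s} = P {ω | Y m ω = s}

namespace IsBirthDeathJumpChain

variable {Ω : Type*} [MeasurableSpace Ω] {P : Measure Ω} {Y : ℕ → Ω → ℝ} {h : ℝ}
  {rp rm : ℝ → ℝ} {m : ℕ} {s : ℝ}

theorem measurableSet_eq (hY : IsBirthDeathJumpChain P Y h rp rm) (m : ℕ) (s : ℝ) :
    MeasurableSet {ω | Y m ω = s} :=
  hY.measurable m (measurableSet_singleton s)

theorem measurableSet_step (hY : IsBirthDeathJumpChain P Y h rp rm) (m : ℕ) (t s : ℝ) :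
    MeasurableSet {ω | Y (m + 1) ω = t ∧ Y m ω = s} :=
  (hY.measurableSet_eq (m + 1) t).inter (hY.measurableSet_eq m s)

theorem setLIntegral_step (hY : IsBirthDeathJumpChain P Y h rp rm) (m : ℕ) (t s : ℝ)
    (G : ℝ → ℝ → ℝ≥0∞) :
    ∫⁻ ω in {ω | Y (m + 1) ω = t ∧ Y m ω = s}, G (Y m ω) (Y (m + 1) ω) ∂P
      = G s t * P {ω | Y (m + 1) ω = t ∧ Y m ω = s} := by
  rw [setLIntegral_congr_fun (hY.measurableSet_step m t s) (g := fun _ => G s t)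
    fun ω (hω : _ ∧ _) => by rw [hω.1, hω.2], setLIntegral_const]

variable [IsFiniteMeasure P]

theorem ae_eq_of_stay (hY : IsBirthDeathJumpChain P Y h rp rm) (hs : rp s + rm s = 0) :
    {ω | Y (m + 1) ω = s ∧ Y m ω = s} =ᵐ[P] {ω | Y m ω = s} :=
  ae_eq_of_subset_of_measure_ge (fun _ hω => hω.2) (hY.stay m s hs).ge
    (hY.measurableSet_step m s s).nullMeasurableSet (measure_ne_top _ _)

theorem ae_eq_of_move (hY : IsBirthDeathJumpChain P Y h rp rm) (hrp : ∀ x, 0 ≤ rp x)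
    (hrm : ∀ x, 0 ≤ rm x) (hh : h ≠ 0) (hs : rp s + rm s ≠ 0) :
    ({ω | Y (m + 1) ω = s + h ∧ Y m ω = s} ∪ {ω | Y (m + 1) ω = s - h ∧ Y m ω = s} : Set Ω)
      =ᵐ[P] {ω | Y m ω = s} := by
  have hrs : 0 < rp s + rm s := (add_nonneg (hrp s) (hrm s)).lt_of_ne' hs
  refine ae_eq_of_subset_of_measure_ge (Set.union_subset (fun _ hω => hω.2) fun _ hω => hω.2)
    (le_of_eq ?_) ((hY.measurableSet_step m _ s).union
      (hY.measurableSet_step m _ s)).nullMeasurableSet (measure_ne_top _ _)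
  rw [measure_union (disjoint_step_add_sub hh m s) (hY.measurableSet_step m _ s), hY.up m s hs,
    hY.down m s hs, ← add_mul,
    ← ENNReal.ofReal_add (div_nonneg (hrp s) hrs.le) (div_nonneg (hrm s) hrs.le), ← add_div,
    div_self hs, ENNReal.ofReal_one, one_mul]

theorem setLIntegral_of_stay (hY : IsBirthDeathJumpChain P Y h rp rm) (hs : rp s + rm s = 0)
    (G : ℝ → ℝ → ℝ≥0∞) :
    ∫⁻ ω in {ω | Y m ω = s}, G (Y m ω) (Y (m + 1) ω) ∂P = G s s * P {ω | Y m ω = s} := by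
  rw [← setLIntegral_congr (hY.ae_eq_of_stay hs), hY.setLIntegral_step, hY.stay m s hs]

theorem setLIntegral_of_move (hY : IsBirthDeathJumpChain P Y h rp rm) (hrp : ∀ x, 0 ≤ rp x)
    (hrm : ∀ x, 0 ≤ rm x) (hh : h ≠ 0) (hs : rp s + rm s ≠ 0) (G : ℝ → ℝ → ℝ≥0∞) :
    ∫⁻ ω in {ω | Y m ω = s}, G (Y m ω) (Y (m + 1) ω) ∂P
      = (ENNReal.ofReal (rp s / (rp s + rm s)) * G s (s + h)
          + ENNReal.ofReal (rm s / (rp s + rm s)) * G s (s - h)) * P {ω | Y m ω = s} := by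
  rw [← setLIntegral_congr (hY.ae_eq_of_move hrp hrm hh hs),
    lintegral_union (hY.measurableSet_step m _ s) (disjoint_step_add_sub hh m s),
    hY.setLIntegral_step, hY.setLIntegral_step, hY.up m s hs, hY.down m s hs]
  ring

theorem ae_le_or_eq_add (hY : IsBirthDeathJumpChain P Y h rp rm) (hrp : ∀ x, 0 ≤ rp x)
    (hrm : ∀ x, 0 ≤ rm x) (hh : 0 < h) {S : Finset ℝ} (hS : ∀ᵐ ω ∂P, Y m ω ∈ S) :
    ∀ᵐ ω ∂P, Y (m + 1) ω ≤ Y m ω ∨ Y (m + 1) ω = Y m ω + h := by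
  have hstep : ∀ s, ∀ᵐ ω ∂P, Y m ω = s → Y (m + 1) ω ≤ s ∨ Y (m + 1) ω = s + h := by
    intro s
    by_cases hs : rp s + rm s = 0
    · filter_upwards [(hY.ae_eq_of_stay hs).mem_iff] with ω hω hYs
      exact Or.inl (hω.2 hYs).1.le
    · filter_upwards [(hY.ae_eq_of_move hrp hrm hh.ne' hs).mem_iff] with ω hω hYs
      rcases hω.2 hYs with hup | hdown
      · exact Or.inr hup.1
      · exact Or.inl (by linarith [hdown.1])
  filter_upwards [hS, (eventually_all_finset S).2 fun s _ => hstep s] with ω hωS hω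
  exact hω _ hωS rfl

end IsBirthDeathJumpChain

theorem mul_pow_add_two_add_mul_pow_le {b p q : ℝ} (hb : 1 ≤ b) (hpq : p + q = 1)
    (hdrift : b * p ≤ q) (k : ℕ) : p * b ^ (k + 2) + q * b ^ k ≤ b ^ (k + 1) := by
  have key : b ^ (k + 1) - (p * b ^ (k + 2) + q * b ^ k) = b ^ k * (b - 1) * (q - b * p) := by
    obtain rfl : p = 1 - q := by linarith
    ring
  have : 0 ≤ b ^ k * (b - 1) * (q - b * p) :=
    mul_nonneg (mul_nonneg (pow_nonneg (zero_le_one.trans hb) k) (sub_nonneg.2 hb))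
      (sub_nonneg.2 hdrift)
  linarith

theorem capped_pow_step_le {b p q : ℝ} (hb : 1 ≤ b) (hq : 0 ≤ q) (hpq : p + q = 1) {n j : ℕ}
    (hj : 0 < j) (hdrift : j ≤ n → b * p ≤ q) :
    p * (b ^ min (j + 1) n - 1 + if j = n then (b - 1) * b ^ n else 0)
      + q * (b ^ min (j - 1) n - 1) ≤ b ^ min j n - 1 := by
  obtain ⟨k, rfl⟩ : ∃ k, j = k + 1 := ⟨j - 1, by omega⟩
  rw [Nat.add_sub_cancel]
  rcases le_or_gt (k + 1) n with hjn | hnj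
  · have hup : b ^ min (k + 1 + 1) n - 1 + (if k + 1 = n then (b - 1) * b ^ n else 0)
        = b ^ (k + 2) - 1 := by
      rcases hjn.lt_or_eq with hlt | rfl
      · rw [min_eq_left (by omega), if_neg hlt.ne]; ring
      · rw [min_eq_right (by omega), if_pos rfl]; ring
    rw [hup, min_eq_left (by omega : k ≤ n), min_eq_left hjn]
    linarith [mul_pow_add_two_add_mul_pow_le hb hpq (hdrift hjn) k]
  · rw [min_eq_right (by omega : n ≤ k + 1 + 1), min_eq_right hnj.le, if_neg hnj.ne', add_zero]
    have hmono : b ^ min k n ≤ b ^ n := pow_le_pow_right₀ hb (min_le_right _ _)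
    obtain rfl : p = 1 - q := by linarith
    nlinarith [mul_le_mul_of_nonneg_left hmono hq]

theorem pow_sub_one_div_lt {b t : ℝ} (hb : 1 < b) {i n : ℕ} (hi : i < t) (hn : 2 * t < n + 1) :
    (b ^ i - 1) / ((b - 1) * b ^ n) < t * Real.exp (-(t * Real.log b)) := by
  have ht : 0 < t := (Nat.cast_nonneg i).trans_lt hi
  have hb₀ : 0 < b := zero_lt_one.trans hb
  have hb₁ : 0 < b - 1 := sub_pos.2 hb
  rw [div_lt_iff₀ (by positivity)]
  rcases i with _ | k
  · simp only [pow_zero, sub_self]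
    positivity
  have hbern : b ^ (k + 1) - 1 ≤ (b - 1) * (k + 1) * b ^ k := by
    have := abs_pow_sub_pow_le b 1 (k + 1)
    rwa [one_pow, abs_of_nonneg (sub_nonneg.2 (one_le_pow₀ hb.le)), abs_of_pos hb₁, abs_one,
      abs_of_pos hb₀, max_eq_left hb.le, Nat.add_sub_cancel, Nat.cast_succ] at this
  have hpow : ∀ j : ℕ, b ^ j = Real.exp (j * Real.log b) := fun j => by
    rw [Real.exp_nat_mul, Real.exp_log hb₀]
  have hexp : b ^ k ≤ Real.exp (-(t * Real.log b)) * b ^ n := by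
    rw [hpow k, hpow n, ← Real.exp_add, Real.exp_le_exp]
    push_cast at hi
    nlinarith [Real.log_pos hb]
  push_cast at hi
  calc b ^ (k + 1) - 1 ≤ (b - 1) * (k + 1) * b ^ k := hbern
    _ < (b - 1) * t * b ^ k := by gcongr
    _ ≤ (b - 1) * t * (Real.exp (-(t * Real.log b)) * b ^ n) := by gcongr
    _ = t * Real.exp (-(t * Real.log b)) * ((b - 1) * b ^ n) := by ring

noncomputable def latticeStates (N : ℕ) : Finset ℝ :=
  (Finset.range (N + 1)).image fun j : ℕ => (j : ℝ) / N

theorem mem_latticeStates {N : ℕ} {s : ℝ} : s ∈ latticeStates N ↔ ∃ j ≤ N, (j : ℝ) / N = s := by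
  simp [latticeStates]

noncomputable def latticePotential (b : ℝ) (n N : ℕ) (y : ℝ) : ℝ≥0∞ :=
  ENNReal.ofReal (b ^ min ⌊(N : ℝ) * y⌋₊ n - 1)

theorem latticePotential_natCast_div (b : ℝ) (n : ℕ) {N : ℕ} (hN : 0 < N) (j : ℕ) :
    latticePotential b n N (j / N) = ENNReal.ofReal (b ^ min j n - 1) := by
  rw [latticePotential, mul_div_cancel₀ _ (by positivity), Nat.floor_natCast]

noncomputable def potentialWithReward (b : ℝ) (n N : ℕ) (x y : ℝ) : ℝ≥0∞ :=
  latticePotential b n N y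
    + if x = n / N ∧ (n : ℝ) / N < y then ENNReal.ofReal ((b - 1) * b ^ n) else 0

theorem potentialWithReward_self (b : ℝ) (n N : ℕ) (s : ℝ) :
    potentialWithReward b n N s s = latticePotential b n N s := by
  rw [potentialWithReward, if_neg fun hc => hc.2.ne' hc.1, add_zero]

theorem potentialWithReward_add_one_div {b : ℝ} (hb : 1 ≤ b) (n : ℕ) {N : ℕ} (hN : 0 < N)
    (j : ℕ) :
    potentialWithReward b n N (j / N) (j / N + 1 / N)
      = ENNReal.ofReal (b ^ min (j + 1) n - 1 + if j = n then (b - 1) * b ^ n else 0) := by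
  have hNR : (0 : ℝ) < N := Nat.cast_pos.2 hN
  have hcond : ((j : ℝ) / N = n / N ∧ (n : ℝ) / N < j / N + 1 / N) ↔ j = n := by
    constructor
    · rintro ⟨h, -⟩
      exact_mod_cast (div_left_inj' hNR.ne').1 h
    · rintro rfl
      exact ⟨rfl, lt_add_of_pos_right _ (by positivity)⟩
  have hpos : (j : ℝ) / N + 1 / N = ((j + 1 : ℕ) : ℝ) / N := by push_cast; ring
  rw [potentialWithReward, if_congr hcond rfl rfl, hpos, latticePotential_natCast_div b n hN]
  split_ifs
  · exact (ENNReal.ofReal_add (sub_nonneg.2 (one_le_pow₀ hb))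
      (mul_nonneg (sub_nonneg.2 hb) (zero_le_one.trans (one_le_pow₀ hb)))).symm
  · rw [add_zero, add_zero]

theorem potentialWithReward_sub_one_div (b : ℝ) (n : ℕ) {N : ℕ} (hN : 0 < N) {j : ℕ}
    (hj : 0 < j) :
    potentialWithReward b n N (j / N) (j / N - 1 / N) = ENNReal.ofReal (b ^ min (j - 1) n - 1) := by
  have hcond : ¬ ((j : ℝ) / N = n / N ∧ (n : ℝ) / N < j / N - 1 / N) := by
    rintro ⟨h, hlt⟩
    rw [← h] at hlt
    linarith [one_div_pos.2 (Nat.cast_pos.2 hN : (0 : ℝ) < N)]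
  have hpos : (j : ℝ) / N - 1 / N = ((j - 1 : ℕ) : ℝ) / N := by
    rw [Nat.cast_sub hj]; push_cast; ring
  rw [potentialWithReward, if_neg hcond, add_zero, hpos, latticePotential_natCast_div b n hN]

section BirthDeathEscape

variable {Ω : Type*} [MeasurableSpace Ω] {P : Measure Ω} {Y : ℕ → Ω → ℝ} {N : ℕ}
  {rp rm : ℝ → ℝ}

theorem setLIntegral_potentialWithReward_le [IsFiniteMeasure P]
    (hY : IsBirthDeathJumpChain P Y (1 / N) rp rm) (hrp : ∀ x, 0 ≤ rp x) (hrm : ∀ x, 0 ≤ rm x)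
    (hrp0 : rp 0 = 0) (hrm0 : rm 0 = 0) (hN : 0 < N) {b : ℝ} (hb : 1 ≤ b) {n j : ℕ}
    (hdrift : 0 < j → j ≤ n → b * rp (j / N) ≤ rm (j / N)) (m : ℕ) :
    ∫⁻ ω in {ω | Y m ω = j / N}, potentialWithReward b n N (Y m ω) (Y (m + 1) ω) ∂P
      ≤ latticePotential b n N (j / N) * P {ω | Y m ω = j / N} := by
  set s : ℝ := j / N with hs_def
  by_cases hs : rp s + rm s = 0
  · rw [hY.setLIntegral_of_stay hs, potentialWithReward_self]
  have hj : 0 < j := by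
    refine Nat.pos_of_ne_zero fun hj0 => hs ?_
    rw [hs_def, hj0, Nat.cast_zero, zero_div, hrp0, hrm0, add_zero]
  have hrs : 0 < rp s + rm s := (add_nonneg (hrp s) (hrm s)).lt_of_ne' hs
  set p := rp s / (rp s + rm s)
  set q := rm s / (rp s + rm s)
  have hp : 0 ≤ p := div_nonneg (hrp s) hrs.le
  have hq : 0 ≤ q := div_nonneg (hrm s) hrs.le
  have hpq : p + q = 1 := by rw [← add_div, div_self hs]
  have hpq_drift : j ≤ n → b * p ≤ q := fun hjn => by
    rw [← mul_div_assoc]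
    exact div_le_div_of_nonneg_right (hdrift hj hjn) hrs.le
  have hpot : ∀ i : ℕ, 0 ≤ b ^ i - 1 := fun i => sub_nonneg.2 (one_le_pow₀ hb)
  have hreward : 0 ≤ if j = n then (b - 1) * b ^ n else 0 := by
    split_ifs
    exacts [mul_nonneg (sub_nonneg.2 hb) (zero_le_one.trans (one_le_pow₀ hb)), le_rfl]
  calc _ = (ENNReal.ofReal p * potentialWithReward b n N s (s + 1 / N)
        + ENNReal.ofReal q * potentialWithReward b n N s (s - 1 / N)) * P {ω | Y m ω = s} :=
        hY.setLIntegral_of_move hrp hrm (by positivity) hs _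
    _ = ENNReal.ofReal (p * (b ^ min (j + 1) n - 1 + if j = n then (b - 1) * b ^ n else 0)
          + q * (b ^ min (j - 1) n - 1)) * P {ω | Y m ω = s} := by
      rw [potentialWithReward_add_one_div hb n hN, potentialWithReward_sub_one_div b n hN hj,
        ENNReal.ofReal_add (mul_nonneg hp (add_nonneg (hpot _) hreward)) (mul_nonneg hq (hpot _)),
        ENNReal.ofReal_mul hp, ENNReal.ofReal_mul hq]
    _ ≤ ENNReal.ofReal (b ^ min j n - 1) * P {ω | Y m ω = s} := by
      gcongr
      exact capped_pow_step_le hb hq hpq hj hpq_drift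
    _ = _ := by rw [latticePotential_natCast_div b n hN]

theorem lintegral_latticePotential_succ_add_le [IsFiniteMeasure P]
    (hY : IsBirthDeathJumpChain P Y (1 / N) rp rm) (hrp : ∀ x, 0 ≤ rp x) (hrm : ∀ x, 0 ≤ rm x)
    (hrp0 : rp 0 = 0) (hrm0 : rm 0 = 0) (hN : 0 < N)
    (hlat : ∀ m, ∀ᵐ ω ∂P, Y m ω ∈ latticeStates N) {b : ℝ} (hb : 1 ≤ b) {n : ℕ}
    (hdrift : ∀ j ≤ N, 0 < j → j ≤ n → b * rp (j / N) ≤ rm (j / N)) (m : ℕ) :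
    ∫⁻ ω, latticePotential b n N (Y (m + 1) ω) ∂P
        + ENNReal.ofReal ((b - 1) * b ^ n) * P {ω | Y m ω = n / N ∧ (n : ℝ) / N < Y (m + 1) ω}
      ≤ ∫⁻ ω, latticePotential b n N (Y m ω) ∂P := by
  have hjump : MeasurableSet {ω | Y m ω = n / N ∧ (n : ℝ) / N < Y (m + 1) ω} :=
    (hY.measurableSet_eq m _).inter (measurableSet_lt measurable_const (hY.measurable _))
  calc _ = ∫⁻ ω, potentialWithReward b n N (Y m ω) (Y (m + 1) ω) ∂P := by
        rw [← lintegral_indicator_const hjump, ← lintegral_add_right _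
          (measurable_const.indicator hjump)]
        simp only [potentialWithReward, Set.indicator_apply, Set.mem_ofPred_eq]
    _ = ∑ s ∈ latticeStates N, ∫⁻ ω in {ω | Y m ω = s},
          potentialWithReward b n N (Y m ω) (Y (m + 1) ω) ∂P :=
        lintegral_eq_sum_setLIntegral (hY.measurable m) (hlat m) _
    _ ≤ ∑ s ∈ latticeStates N, latticePotential b n N s * P {ω | Y m ω = s} := by
      refine Finset.sum_le_sum fun s hs => ?_
      obtain ⟨j, hjN, rfl⟩ := mem_latticeStates.1 hs
      exact setLIntegral_potentialWithReward_le hY hrp hrm hrp0 hrm0 hN hb (hdrift j hjN) m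
    _ = ∫⁻ ω, latticePotential b n N (Y m ω) ∂P := by
      rw [lintegral_eq_sum_setLIntegral (hY.measurable m) (hlat m)]
      exact Finset.sum_congr rfl fun s _ => (setLIntegral_comp_eq (hY.measurable m) _ s).symm

theorem tsum_measure_upJump_le [IsProbabilityMeasure P]
    (hY : IsBirthDeathJumpChain P Y (1 / N) rp rm) (hrp : ∀ x, 0 ≤ rp x) (hrm : ∀ x, 0 ≤ rm x)
    (hrp0 : rp 0 = 0) (hrm0 : rm 0 = 0) (hN : 0 < N)
    (hlat : ∀ m, ∀ᵐ ω ∂P, Y m ω ∈ latticeStates N) {b : ℝ} (hb : 1 < b) {n : ℕ}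
    (hdrift : ∀ j ≤ N, 0 < j → j ≤ n → b * rp (j / N) ≤ rm (j / N)) {i₀ : ℕ}
    (hinit : ∀ᵐ ω ∂P, Y 0 ω = i₀ / N) :
    ∑' m, P {ω | Y m ω = n / N ∧ (n : ℝ) / N < Y (m + 1) ω}
      ≤ ENNReal.ofReal ((b ^ min i₀ n - 1) / ((b - 1) * b ^ n)) := by
  have hc : 0 < (b - 1) * b ^ n := mul_pos (sub_pos.2 hb) (pow_pos (zero_lt_one.trans hb) n)
  rw [ENNReal.ofReal_div_of_pos hc, ENNReal.le_div_iff_mul_le (Or.inl (by simpa using hc))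
    (Or.inl ENNReal.ofReal_ne_top), mul_comm, ← ENNReal.tsum_mul_left]
  calc _ ≤ ∫⁻ ω, latticePotential b n N (Y 0 ω) ∂P :=
        tsum_le_of_succ_add_le (F := fun m => ∫⁻ ω, latticePotential b n N (Y m ω) ∂P)
          (lintegral_latticePotential_succ_add_le hY hrp hrm hrp0 hrm0 hN hlat hb.le hdrift)
    _ = ENNReal.ofReal (b ^ min i₀ n - 1) := by
      rw [lintegral_congr_ae (hinit.mono fun ω hω => congrArg (latticePotential b n N) hω),
        lintegral_const, measure_univ, mul_one, latticePotential_natCast_div b n hN]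

theorem measure_exists_lt_le_tsum_measure_upJump [IsFiniteMeasure P]
    (hY : IsBirthDeathJumpChain P Y (1 / N) rp rm) (hrp : ∀ x, 0 ≤ rp x) (hrm : ∀ x, 0 ≤ rm x)
    (hN : 0 < N) (hlat : ∀ m, ∀ᵐ ω ∂P, Y m ω ∈ latticeStates N) {L : ℝ}
    (h₀ : ∀ᵐ ω ∂P, Y 0 ω ≤ L) :
    P {ω | ∃ m, L < Y m ω}
      ≤ ∑' m, P {ω | Y m ω = ⌊L * N⌋₊ / N ∧ (⌊L * N⌋₊ : ℝ) / N < Y (m + 1) ω} := by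
  have hNR : (0 : ℝ) < N := Nat.cast_pos.2 hN
  refine (measure_mono_ae ?_).trans (measure_iUnion_le _)
  filter_upwards [h₀, ae_all_iff.2 hlat,
    ae_all_iff.2 fun m => hY.ae_le_or_eq_add hrp hrm (by positivity) (hlat m)]
    with ω hω₀ hωlat hωstep hexceeds
  obtain ⟨m, hle, hlt⟩ := exists_le_and_lt_succ hω₀ hexceeds
  obtain ⟨j, -, hj⟩ := mem_latticeStates.1 (hωlat m)
  have hup : Y (m + 1) ω = Y m ω + 1 / N := (hωstep m).resolve_left (hle.trans_lt hlt).not_ge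
  have hfloor : ⌊L * N⌋₊ = j := by
    rw [← hj] at hle hup
    rw [hup, ← add_div] at hlt
    have hjL : (j : ℝ) ≤ L * N := (div_le_iff₀ hNR).1 hle
    exact (Nat.floor_eq_iff ((Nat.cast_nonneg j).trans hjL)).2 ⟨hjL, (lt_div_iff₀ hNR).1 hlt⟩
  refine Set.mem_iUnion.2 ⟨m, ?_, ?_⟩
  · rw [hfloor, hj]
  · rw [hfloor, hj]
    exact hle.trans_lt hlt

end BirthDeathEscape

/-- For a birth–death chain on `E_N = {i/N : 0 ≤ i ≤ N}` with
rates `r⁺, r⁻` vanishing at `0` and satisfying the drift condition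
`r⁻(x) ≥ (1+δ) r⁺(x)` on `E_N ∩ (0, 2ε̄]`, started at `x < ε̄`, the probability
of ever exceeding `2ε̄` is less than `ε̄ N e^{-ε̄ C N}` with `C = log(1+δ)`.
The process is encoded through its embedded jump chain `Y`: from a state `s`
with `r⁺(s) + r⁻(s) > 0` it moves to `s ± 1/N` with probabilities
`r±(s)/(r⁺(s)+r⁻(s))`, and states with zero total rate are absorbing; the
event `sup_{t≥0} X(t) > 2ε̄` coincides with `∃ m, Y m > 2ε̄`. -/
theorem stmt17 (N : ℕ) (hN : 0 < N)
    (rp rm : ℝ → ℝ) (hrp : ∀ x, 0 ≤ rp x) (hrm : ∀ x, 0 ≤ rm x)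
    (hrp0 : rp 0 = 0) (hrm0 : rm 0 = 0)
    (εb δ : ℝ) (hεb : 0 < εb) (hδ : 0 < δ)
    (hdrift : ∀ x : ℝ, (∃ i : ℕ, i ≤ N ∧ x = (i : ℝ) / N) →
      0 < x → x ≤ 2*εb → (1+δ) * rp x ≤ rm x)
    (Ω : Type*) [MeasurableSpace Ω] (P : Measure Ω) [IsProbabilityMeasure P]
    (Y : ℕ → Ω → ℝ) (hmeas : ∀ m, Measurable (Y m))
    (x : ℝ) (hxE : ∃ i : ℕ, i ≤ N ∧ x = (i : ℝ) / N) (hx : x < εb)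
    (hinit : ∀ᵐ ω ∂P, Y 0 ω = x)
    (hstate : ∀ m, ∀ᵐ ω ∂P, ∃ i : ℕ, i ≤ N ∧ Y m ω = (i : ℝ) / N)
    (hup : ∀ m : ℕ, ∀ s : ℝ, rp s + rm s ≠ 0 →
      P {ω | Y (m+1) ω = s + 1/N ∧ Y m ω = s}
        = ENNReal.ofReal (rp s / (rp s + rm s)) * P {ω | Y m ω = s})
    (hdown : ∀ m : ℕ, ∀ s : ℝ, rp s + rm s ≠ 0 →
      P {ω | Y (m+1) ω = s - 1/N ∧ Y m ω = s}
        = ENNReal.ofReal (rm s / (rp s + rm s)) * P {ω | Y m ω = s})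
    (habs : ∀ m : ℕ, ∀ s : ℝ, rp s + rm s = 0 →
      P {ω | Y (m+1) ω = s ∧ Y m ω = s} = P {ω | Y m ω = s}) :
    P {ω | ∃ m : ℕ, Y m ω > 2*εb}
      < ENNReal.ofReal (εb * N * Real.exp (-(εb * Real.log (1+δ) * N))) := by
  obtain ⟨i₀, -, rfl⟩ := hxE
  have hY : IsBirthDeathJumpChain P Y (1 / N) rp rm := ⟨hmeas, hup, hdown, habs⟩
  have hlat : ∀ m, ∀ᵐ ω ∂P, Y m ω ∈ latticeStates N := fun m =>
    (hstate m).mono fun ω ⟨j, hj, hYj⟩ => mem_latticeStates.2 ⟨j, hj, hYj.symm⟩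
  have hNR : (0 : ℝ) < N := Nat.cast_pos.2 hN
  set n := ⌊2 * εb * N⌋₊
  have hi₀ : (i₀ : ℝ) < εb * N := (div_lt_iff₀ hNR).1 hx
  have hdrift' : ∀ j ≤ N, 0 < j → j ≤ n → (1 + δ) * rp (j / N) ≤ rm (j / N) :=
    fun j hjN hj hjn => hdrift _ ⟨j, hjN, rfl⟩ (by positivity)
      ((div_le_iff₀ hNR).2 ((Nat.cast_le.2 hjn).trans (Nat.floor_le (by positivity))))
  have hjumps := tsum_measure_upJump_le hY hrp hrm hrp0 hrm0 hN hlat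
    (by linarith : 1 < 1 + δ) hdrift' hinit
  rw [min_eq_left (Nat.le_floor (by linarith))] at hjumps
  have hn : 2 * (εb * N) < n + 1 := by rw [← mul_assoc]; exact Nat.lt_floor_add_one _
  calc P {ω | ∃ m : ℕ, Y m ω > 2 * εb}
      ≤ ∑' m, P {ω | Y m ω = n / N ∧ (n : ℝ) / N < Y (m + 1) ω} :=
        measure_exists_lt_le_tsum_measure_upJump hY hrp hrm hN hlat
          (hinit.mono fun ω hω => by rw [hω]; linarith)
    _ ≤ _ := hjumps
    _ < _ := by
      rw [ENNReal.ofReal_lt_ofReal_iff (by positivity),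
        show εb * Real.log (1 + δ) * N = εb * N * Real.log (1 + δ) by ring]
      exact pow_sub_one_div_lt (by linarith) hi₀ hn
end
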